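/- arXiv:2404.17306 — 3 statements merged into one kernel-verified Lean document; each statement's English description precedes it below -/
import Mathlib

section
/- Let G be a graph, let S ⊆ V(G), let (T, (W_x | x ∈ V(T))) be a tree decomposition of (G,S), and let ℱ be a family of connected subgraphs of G, each intersecting S. For every positive integer k, either ℱ contains k pairwise vertex-disjoint subgraphs, or there is a set Z ⊆ V(G) that is a union of at most k−1 bags such that every member of ℱ has a vertex in Z. -/
open SimpleGraph

/-- A separation of a graph `G`: a pair `(A,B)` of subgraphs with `A ⊔ B = G`
and no edge in both `A` and `B`. -/
structure Separation {V : Type} (G : SimpleGraph V) where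
  A : G.Subgraph
  B : G.Subgraph
  union_eq : A ⊔ B = ⊤
  edge_disjoint : ∀ u v : V, A.Adj u v → B.Adj u v → False

namespace Separation

variable {V : Type} {G : SimpleGraph V}

/-- The order of a separation: `|V(A) ∩ V(B)|`. -/
noncomputable def order (s : Separation G) : ℕ := (s.A.verts ∩ s.B.verts).ncard

/-- The reversed separation `(B,A)`. -/
def flip (s : Separation G) : Separation G :=
  ⟨s.B, s.A, by rw [sup_comm]; exact s.union_eq,
    fun u v hb ha => s.edge_disjoint u v ha hb⟩

end Separation

/-- `𝒯` is a tangle of order `k` in `G`. -/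
def IsTangle {V : Type} (G : SimpleGraph V) (k : ℕ) (𝒯 : Set (Separation G)) : Prop :=
  (∀ s ∈ 𝒯, s.order < k) ∧
  (∀ s : Separation G, s.order ≤ k - 1 → s ∈ 𝒯 ∨ s.flip ∈ 𝒯) ∧
  (∀ s₁ ∈ 𝒯, ∀ s₂ ∈ 𝒯, ∀ s₃ ∈ 𝒯,
    s₁.A ⊔ s₂.A ⊔ s₃.A ≠ (⊤ : G.Subgraph)) ∧
  (∀ s ∈ 𝒯, s.A.verts ≠ Set.univ)

/-- `𝒯` is a tangle of `(G,S)` of order `k`: a tangle of `G` such that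
no member `(A,B)` has `S ⊆ V(A)`. -/
def IsTangleS {V : Type} (G : SimpleGraph V) (S : Set V) (k : ℕ)
    (𝒯 : Set (Separation G)) : Prop :=
  IsTangle G k 𝒯 ∧ ∀ s ∈ 𝒯, ¬ S ⊆ s.A.verts

/-- The tangle number of `(G,S)`: the maximum order of a tangle of `(G,S)`. -/
noncomputable def tangleNum {V : Type} (G : SimpleGraph V) (S : Set V) : ℕ :=
  sSup {k | ∃ 𝒯 : Set (Separation G), IsTangleS G S k 𝒯}

/-- `u` and `v` are joined by a walk avoiding `U`. -/
def ReachOutside {V : Type} (G : SimpleGraph V) (U : Set V) (u v : V) : Prop :=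
  ∃ p : G.Walk u v, ∀ x ∈ p.support, x ∉ U

/-- A tree decomposition of `(G,S)`: a tree decomposition of the induced subgraph of
`G` on the union of the bags, a set containing `S`, such that every component of `G`
minus the union of the bags has all its neighbors in `G` inside a single bag. -/
structure TreeDecompS {V ι : Type} (G : SimpleGraph V) (S : Set V) (T : SimpleGraph ι) where
  isTree : T.IsTree
  bag : ι → Set V
  S_subset : S ⊆ ⋃ x, bag x
  edge_in_bag : ∀ u v : V, u ∈ ⋃ x, bag x → v ∈ ⋃ x, bag x → G.Adj u v →
    ∃ x, u ∈ bag x ∧ v ∈ bag x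
  bags_connected : ∀ v ∈ ⋃ x, bag x, (T.induce {x | v ∈ bag x}).Connected
  comp_in_bag : ∀ v, v ∉ (⋃ x, bag x) → ∃ x, ∀ w y : V,
    ReachOutside G (⋃ x', bag x') v w → G.Adj w y → y ∈ ⋃ x', bag x' → y ∈ bag x

/-- `(G,S)` has a tree decomposition of width at most `n`. -/
def HasTreewidthSLE {V : Type} (G : SimpleGraph V) (S : Set V) (n : ℕ) : Prop :=
  ∃ (ι : Type) (T : SimpleGraph ι) (d : TreeDecompS G S T), ∀ x, (d.bag x).ncard ≤ n + 1

/-- The treewidth of `(G,S)`. -/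
noncomputable def twS {V : Type} (G : SimpleGraph V) (S : Set V) : ℕ :=
  sInf {n | HasTreewidthSLE G S n}

/-- A path decomposition of `(G,S)` with bags indexed by `Fin m`. -/
structure PathDecompS {V : Type} (G : SimpleGraph V) (S : Set V) (m : ℕ) where
  bag : Fin m → Set V
  S_subset : S ⊆ ⋃ i, bag i
  edge_in_bag : ∀ u v : V, u ∈ ⋃ i, bag i → v ∈ ⋃ i, bag i → G.Adj u v →
    ∃ i, u ∈ bag i ∧ v ∈ bag i
  interval : ∀ (v : V) (i j l : Fin m), i ≤ j → j ≤ l → v ∈ bag i → v ∈ bag l → v ∈ bag j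
  comp_in_bag : ∀ v, v ∉ (⋃ i, bag i) → ∃ i, ∀ w y : V,
    ReachOutside G (⋃ i', bag i') v w → G.Adj w y → y ∈ ⋃ i', bag i' → y ∈ bag i

/-- The pathwidth of `(G,S)`. -/
noncomputable def pwS {V : Type} (G : SimpleGraph V) (S : Set V) : ℕ :=
  sInf {n | ∃ (m : ℕ) (d : PathDecompS G S m), ∀ i, (d.bag i).ncard ≤ n + 1}

/-- An elimination forest of `(G,S)`, encoded by its (reflexive) ancestor relation `anc`
on the vertex set `W` of an induced subgraph of `G` containing `S`.  Edges of the induced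
subgraph join comparable vertices, and the neighborhood of every component of `G - W`
is a chain (equivalently, lies on a single root-to-leaf path). -/
structure ElimForestS {V : Type} (G : SimpleGraph V) (S : Set V) where
  W : Set V
  S_subset : S ⊆ W
  anc : V → V → Prop
  anc_dom : ∀ u v, anc u v → u ∈ W ∧ v ∈ W
  anc_refl : ∀ v ∈ W, anc v v
  anc_antisymm : ∀ u v, anc u v → anc v u → u = v
  anc_trans : ∀ u v w, anc u v → anc v w → anc u w
  ancestors_chain : ∀ u₁ u₂ v, anc u₁ v → anc u₂ v → anc u₁ u₂ ∨ anc u₂ u₁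
  edges_comparable : ∀ u v, u ∈ W → v ∈ W → G.Adj u v → anc u v ∨ anc v u
  comp_chain : ∀ v, v ∉ W → ∀ w₁ w₂ y₁ y₂ : V,
    ReachOutside G W v w₁ → ReachOutside G W v w₂ →
    G.Adj w₁ y₁ → G.Adj w₂ y₂ → y₁ ∈ W → y₂ ∈ W → anc y₁ y₂ ∨ anc y₂ y₁

/-- The vertex-height of an elimination forest is at most `h`:
every chain of the ancestor order has at most `h` elements. -/
def ElimForestS.HeightLE {V : Type} {G : SimpleGraph V} {S : Set V}
    (F : ElimForestS G S) (h : ℕ) : Prop :=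
  ∀ c : Finset V, (∀ x ∈ c, ∀ y ∈ c, F.anc x y ∨ F.anc y x) → c.card ≤ h

/-- The treedepth of `(G,S)`: minimum vertex-height of an elimination forest of `(G,S)`. -/
noncomputable def tdS {V : Type} (G : SimpleGraph V) (S : Set V) : ℕ :=
  sInf {h | ∃ F : ElimForestS G S, F.HeightLE h}

/-- `B` is a model of `H` in `G`: pairwise disjoint nonempty connected branch sets,
with an edge of `G` between the branch sets of any two adjacent vertices of `H`. -/
structure IsModelOn {V W : Type} (G : SimpleGraph V) (H : SimpleGraph W)
    (B : W → Set V) : Prop where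
  pairwise_disjoint : ∀ x y, x ≠ y → Disjoint (B x) (B y)
  nonempty : ∀ x, (B x).Nonempty
  connected : ∀ x, (G.induce (B x)).Connected
  adj : ∀ x y, H.Adj x y → ∃ u ∈ B x, ∃ v ∈ B y, G.Adj u v

/-- `G` contains no model of `H`, i.e. `G` is `H`-minor-free. -/
def MinorFree {V W : Type} (G : SimpleGraph V) (H : SimpleGraph W) : Prop :=
  ¬ ∃ B : W → Set V, IsModelOn G H B

/-- A family of `n` pairwise vertex-disjoint `X`–`Y` paths in `G`. -/
structure DisjointXYPaths {V : Type} (G : SimpleGraph V) (X Y : Set V) (n : ℕ) where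
  a : Fin n → V
  b : Fin n → V
  p : ∀ i, G.Walk (a i) (b i)
  isPath : ∀ i, (p i).IsPath
  mem_X : ∀ i, a i ∈ X
  mem_Y : ∀ i, b i ∈ Y
  internal : ∀ i, ∀ v ∈ (p i).support, v ≠ a i → v ≠ b i → v ∉ X ∪ Y
  disjoint : ∀ i j, i ≠ j → ∀ v, v ∈ (p i).support → v ∉ (p j).support

/-- The graph obtained from `H` by adding a universal vertex. -/
def addUniversal {W : Type} (H : SimpleGraph W) : SimpleGraph (W ⊕ Unit) :=
  SimpleGraph.fromRel (fun a b =>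
    (∃ x y, a = Sum.inl x ∧ b = Sum.inl y ∧ H.Adj x y) ∨ (∃ x, a = Sum.inl x ∧ b = Sum.inr ()))

/-- The fan on `ℓ + 1` vertices: the path on `ℓ` vertices plus a universal vertex. -/
def fanGraph (ℓ : ℕ) : SimpleGraph (Fin ℓ ⊕ Unit) := addUniversal (SimpleGraph.pathGraph ℓ)

/-- `X` is a fan: it becomes a path after removal of at most one vertex. -/
def IsFan {W : Type} (X : SimpleGraph W) : Prop :=
  (∃ n : ℕ, Nonempty (X ≃g SimpleGraph.pathGraph n)) ∨
  (∃ x₀ : W, ∃ n : ℕ, Nonempty (X.induce {v | v ≠ x₀} ≃g SimpleGraph.pathGraph n))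

/-- `X` is an apex-forest: it becomes a forest after removal of at most one vertex. -/
def IsApexForest {W : Type} (X : SimpleGraph W) : Prop :=
  X.IsAcyclic ∨ ∃ x₀ : W, (X.induce {v | v ≠ x₀}).IsAcyclic

/-- `f` assigns layers to the vertices of `G`: every edge joins vertices in the same
or in consecutive layers. -/
def IsLayering {V : Type} (G : SimpleGraph V) (f : V → ℕ) : Prop :=
  ∀ u v, G.Adj u v → f u ≤ f v + 1 ∧ f v ≤ f u + 1

/-- `G` has layered pathwidth at most `c`. -/
def LayeredPathwidthLE {V : Type} (G : SimpleGraph V) (c : ℕ) : Prop :=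
  ∃ (m : ℕ) (d : PathDecompS G Set.univ m) (f : V → ℕ),
    IsLayering G f ∧ ∀ (i : Fin m) (j : ℕ), (d.bag i ∩ f ⁻¹' {j}).ncard ≤ c

/-- `G` has layered treedepth at most `c`: there are an elimination forest of `G` and a
layering such that every root-to-leaf path meets every layer in at most `c` vertices. -/
def LayeredTreedepthLE {V : Type} (G : SimpleGraph V) (c : ℕ) : Prop :=
  ∃ (F : ElimForestS G Set.univ) (f : V → ℕ),
    IsLayering G f ∧ ∀ (v : V) (j : ℕ), ({u | F.anc u v} ∩ f ⁻¹' {j}).ncard ≤ c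


namespace EPAux

attribute [local instance 10] Classical.propDecidable

variable {ι : Type} {T : SimpleGraph ι}

noncomputable def treePath (hT : T.IsTree) (a b : ι) : T.Walk a b :=
  (hT.isConnected.preconnected a b).some.bypass

lemma treePath_isPath (hT : T.IsTree) (a b : ι) : (treePath hT a b).IsPath :=
  Walk.bypass_isPath _

lemma eq_treePath (hT : T.IsTree) {a b : ι} (w : T.Walk a b) (hw : w.IsPath) :
    w = treePath hT a b :=
  Subtype.ext_iff.mp
    (hT.IsAcyclic.path_unique ⟨w, hw⟩ ⟨treePath hT a b, treePath_isPath hT a b⟩)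

lemma treePath_support_subset (hT : T.IsTree) {a b : ι} (w : T.Walk a b) :
    (treePath hT a b).support ⊆ w.support := by
  rw [← eq_treePath hT w.bypass w.bypass_isPath]
  exact w.support_bypass_subset

lemma treePath_length (hT : T.IsTree) (a b : ι) :
    (treePath hT a b).length = T.dist a b := by
  refine le_antisymm ?_ (SimpleGraph.dist_le _)
  obtain ⟨p, hp⟩ := hT.isConnected.exists_walk_length_eq_dist a b
  calc (treePath hT a b).length = p.bypass.length := by
        rw [eq_treePath hT p.bypass p.bypass_isPath]
    _ ≤ p.length := p.length_bypass_le
    _ = _ := hp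

lemma dist_split (hT : T.IsTree) {a b c : ι} (hc : c ∈ (treePath hT a b).support) :
    T.dist a b = T.dist a c + T.dist c b := by
  classical
  have h1 : ((treePath hT a b).takeUntil c hc).IsPath :=
    (treePath_isPath hT a b).takeUntil hc
  have h2 : ((treePath hT a b).dropUntil c hc).IsPath :=
    (treePath_isPath hT a b).dropUntil hc
  have e1 := eq_treePath hT _ h1
  have e2 := eq_treePath hT _ h2
  have h3 := congrArg Walk.length ((treePath hT a b).take_spec hc)
  rw [Walk.length_append] at h3
  rw [← treePath_length hT a b, ← treePath_length hT a c, ← treePath_length hT c b,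
    ← e1, ← e2, h3]

lemma isPath_append_of {a b c : ι} {p : T.Walk a b} {q : T.Walk b c}
    (hp : p.IsPath) (hq : q.IsPath)
    (h : ∀ z ∈ p.support, z ∈ q.support → z = b) : (p.append q).IsPath := by
  rw [Walk.isPath_def, Walk.support_append]
  have hqn : q.support.Nodup := (Walk.isPath_def q).mp hq
  have hbt : b ∉ q.support.tail := by
    have := q.support_eq_cons
    rw [this] at hqn
    exact (List.nodup_cons.mp hqn).1
  refine List.Nodup.append ((Walk.isPath_def p).mp hp) ?_ ?_
  · have := q.support_eq_cons
    rw [this] at hqn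
    exact (List.nodup_cons.mp hqn).2
  · intro z hz hz'
    have hzq : z ∈ q.support := by
      rw [q.support_eq_cons]; exact List.mem_cons_of_mem _ hz'
    exact hbt ((h z hz hzq) ▸ hz')

lemma exists_firstHit' {x r : ι} (q : T.Walk x r) :
    ∀ {y c : ι} (p : T.Walk y c), c ∈ q.support → ∃ m, m ∈ q.support ∧
      ∃ w : T.Walk y m, (∀ z ∈ w.support, z ∈ p.support) ∧
        (∀ z ∈ w.support, z ∈ q.support → z = m) := by
  intro y c p
  induction p with
  | nil =>
    intro hc
    exact ⟨_, hc, Walk.nil, by simp, by simp⟩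
  | @cons u u' v h p ih =>
    intro hc
    by_cases hu : u ∈ q.support
    · exact ⟨u, hu, Walk.nil, by simp, by simp⟩
    · obtain ⟨m, hmq, w, hwp, hwq⟩ := ih hc
      refine ⟨m, hmq, Walk.cons h w, ?_, ?_⟩
      · intro z hz
        rw [Walk.support_cons] at hz ⊢
        rcases List.mem_cons.mp hz with rfl | hz
        · exact List.mem_cons_self
        · exact List.mem_cons_of_mem _ (hwp z hz)
      · intro z hz hzq
        rw [Walk.support_cons] at hz
        rcases List.mem_cons.mp hz with rfl | hz
        · exact absurd hzq hu
        · exact hwq z hz hzq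

lemma exists_median (hT : T.IsTree) (y x r : ι) :
    ∃ m, m ∈ (treePath hT y r).support ∧ m ∈ (treePath hT x r).support ∧
      m ∈ (treePath hT y x).support := by
  classical
  obtain ⟨m, hmq, w, hwp, hwq⟩ :=
    exists_firstHit' (treePath hT x r) (treePath hT y r) (treePath hT x r).end_mem_support
  have hw2p : w.bypass.IsPath := w.bypass_isPath
  have hsub := w.support_bypass_subset
  have hseg : ((treePath hT x r).takeUntil m hmq).reverse.IsPath :=
    ((treePath_isPath hT x r).takeUntil hmq).reverse
  have happ : (w.bypass.append ((treePath hT x r).takeUntil m hmq).reverse).IsPath := by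
    refine isPath_append_of hw2p hseg ?_
    intro z hz hz'
    refine hwq z (hsub hz) ?_
    rw [Walk.support_reverse] at hz'
    exact (treePath hT x r).support_takeUntil_subset hmq (List.mem_reverse.mp hz')
  have heq := eq_treePath hT _ happ
  refine ⟨m, hwp m (hsub w.bypass.end_mem_support), hmq, ?_⟩
  rw [← heq, Walk.mem_support_append_iff]
  exact Or.inr (Walk.start_mem_support _)

def WConn (T : SimpleGraph ι) (N : Set ι) : Prop :=
  ∀ x ∈ N, ∀ y ∈ N, ∃ w : T.Walk x y, ∀ z ∈ w.support, z ∈ N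

lemma wconn_treePath_subset (hT : T.IsTree) {N : Set ι} (hN : WConn T N)
    {a b : ι} (ha : a ∈ N) (hb : b ∈ N) :
    ∀ z ∈ (treePath hT a b).support, z ∈ N := by
  obtain ⟨w, hw⟩ := hN a ha b hb
  exact fun z hz => hw z (treePath_support_subset hT w hz)

lemma tree_pivot (hT : T.IsTree) (r : ι) {N M : Set ι} (hN : WConn T N) (hM : WConn T M)
    {x₀ : ι} (hx₀ : x₀ ∈ N) (hmin : ∀ x ∈ N, T.dist x₀ r ≤ T.dist x r)
    {y : ι} (hyM : y ∈ M) (hyN : y ∈ N) {z : ι} (hzM : z ∈ M)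
    (hz : T.dist z r ≤ T.dist x₀ r) : x₀ ∈ M := by
  classical
  obtain ⟨m, hm_yr, hm_xr, hm_yx⟩ := exists_median hT y x₀ r
  have hmN : m ∈ N := wconn_treePath_subset hT hN hyN hx₀ m hm_yx
  have h1 : T.dist x₀ r = T.dist x₀ m + T.dist m r := dist_split hT hm_xr
  have h2 : T.dist x₀ r ≤ T.dist m r := hmin m hmN
  have h3 : T.dist x₀ m = 0 := by omega
  have hx₀m : x₀ = m := hT.isConnected.dist_eq_zero_iff.mp h3
  have hx₀_yr : x₀ ∈ (treePath hT y r).support := hx₀m ▸ hm_yr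
  obtain ⟨m', hm'_yr, hm'_zr, hm'_yz⟩ := exists_median hT y z r
  have hm'M : m' ∈ M := wconn_treePath_subset hT hM hyM hzM m' hm'_yz
  have h4 : T.dist z r = T.dist z m' + T.dist m' r := dist_split hT hm'_zr
  have h5 : T.dist m' r ≤ T.dist x₀ r := le_trans (by omega) hz
  have hsplit := (treePath hT y r).take_spec hm'_yr
  have hcase : x₀ ∈ ((treePath hT y r).takeUntil m' hm'_yr).support ∨
      x₀ ∈ ((treePath hT y r).dropUntil m' hm'_yr).support := by
    rw [← Walk.mem_support_append_iff, hsplit]; exact hx₀_yr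
  rcases hcase with htake | hdrop
  · have htp : ((treePath hT y r).takeUntil m' hm'_yr).IsPath :=
      (treePath_isPath hT y r).takeUntil _
    have e : (treePath hT y r).takeUntil m' hm'_yr = treePath hT y m' := eq_treePath hT _ htp
    have hx0ym' : x₀ ∈ (treePath hT y m').support := e ▸ htake
    have htp2 : ((treePath hT y z).takeUntil m' hm'_yz).IsPath :=
      (treePath_isPath hT y z).takeUntil _
    have e2 : (treePath hT y z).takeUntil m' hm'_yz = treePath hT y m' := eq_treePath hT _ htp2
    have hx1 : x₀ ∈ ((treePath hT y z).takeUntil m' hm'_yz).support := e2 ▸ hx0ym'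
    have hx2 : x₀ ∈ (treePath hT y z).support :=
      (treePath hT y z).support_takeUntil_subset _ hx1
    exact wconn_treePath_subset hT hM hyM hzM x₀ hx2
  · have hdp : ((treePath hT y r).dropUntil m' hm'_yr).IsPath :=
      (treePath_isPath hT y r).dropUntil _
    have e : (treePath hT y r).dropUntil m' hm'_yr = treePath hT m' r := eq_treePath hT _ hdp
    have h6 : T.dist m' r = T.dist m' x₀ + T.dist x₀ r := dist_split hT (e ▸ hdrop)
    have h7 : T.dist m' x₀ = 0 := by omega
    have : m' = x₀ := hT.isConnected.dist_eq_zero_iff.mp h7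
    exact this ▸ hm'M


variable {V ι : Type} {G : SimpleGraph V} {S : Set V} {T : SimpleGraph ι}

def NFd (d : TreeDecompS G S T) (A : Set V) : Set ι := {x | (d.bag x ∩ A).Nonempty}

def AnchorP (d : TreeDecompS G S T) (u : V) (x : ι) : Prop :=
  u ∈ d.bag x ∨ (u ∉ (⋃ x', d.bag x') ∧ ∀ w y, ReachOutside G (⋃ x', d.bag x') u w →
    G.Adj w y → y ∈ ⋃ x', d.bag x' → y ∈ d.bag x)

lemma baglink (d : TreeDecompS G S T) {v : V} {x y : ι}
    (hx : v ∈ d.bag x) (hy : v ∈ d.bag y) :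
    ∃ tw : T.Walk x y, ∀ t ∈ tw.support, v ∈ d.bag t := by
  have hv : v ∈ ⋃ x', d.bag x' := Set.mem_iUnion.mpr ⟨x, hx⟩
  have hc := d.bags_connected v hv
  obtain ⟨w⟩ := hc.preconnected ⟨x, hx⟩ ⟨y, hy⟩
  let f : T.induce {x | v ∈ d.bag x} →g T := ⟨Subtype.val, fun {a b} h => h⟩
  refine ⟨w.map f, ?_⟩
  intro t ht
  rw [SimpleGraph.Walk.support_map] at ht
  obtain ⟨a, _, rfl⟩ := List.mem_map.mp ht
  exact a.2

lemma anchor_walk (d : TreeDecompS G S T) {A : Set V} :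
    ∀ {u v : V} (W : G.Walk u v), (∀ z ∈ W.support, z ∈ A) →
      ∀ {x y : ι}, AnchorP d u x → v ∈ d.bag y →
      ∃ tw : T.Walk x y, ∀ t ∈ tw.support, t ∈ NFd d A := by
  intro u v W
  induction W with
  | nil =>
    intro hA x y hanc hv
    rcases hanc with hx | hpr
    · obtain ⟨tw, htw⟩ := baglink d hx hv
      exact ⟨tw, fun t ht => ⟨_, htw t ht, hA _ (by simp)⟩⟩
    · exact absurd (Set.mem_iUnion.mpr ⟨y, hv⟩) hpr.1
  | @cons u u' v h W ih =>
    intro hA x y hanc hv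
    have hA' : ∀ z ∈ W.support, z ∈ A := fun z hz => hA z (by simp [hz])
    have huA : u ∈ A := hA u (SimpleGraph.Walk.start_mem_support _)
    by_cases hu' : u' ∈ ⋃ x', d.bag x'
    · rcases hanc with hx | hpr
      · have hu : u ∈ ⋃ x', d.bag x' := Set.mem_iUnion.mpr ⟨x, hx⟩
        obtain ⟨z, hz1, hz2⟩ := d.edge_in_bag u u' hu hu' h
        obtain ⟨tw1, htw1⟩ := baglink d hx hz1
        obtain ⟨tw2, htw2⟩ := ih hA' (Or.inl hz2) hv
        refine ⟨tw1.append tw2, ?_⟩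
        intro t ht
        rcases (SimpleGraph.Walk.mem_support_append_iff _ _).mp ht with ht | ht
        · exact ⟨_, htw1 t ht, huA⟩
        · exact htw2 t ht
      · have hreach : ReachOutside G (⋃ x', d.bag x') u u :=
          ⟨SimpleGraph.Walk.nil, by intro t ht; simp at ht; subst ht; exact hpr.1⟩
        have hu'x : u' ∈ d.bag x := hpr.2 u u' hreach h hu'
        exact ih hA' (Or.inl hu'x) hv
    · rcases hanc with hx | hpr
      · obtain ⟨x₀, hx₀⟩ := d.comp_in_bag u' hu'
        have hreach : ReachOutside G (⋃ x', d.bag x') u' u' :=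
          ⟨SimpleGraph.Walk.nil, by intro t ht; simp at ht; subst ht; exact hu'⟩
        have hux₀ : u ∈ d.bag x₀ := hx₀ u' u hreach h.symm (Set.mem_iUnion.mpr ⟨x, hx⟩)
        obtain ⟨tw1, htw1⟩ := baglink d hx hux₀
        obtain ⟨tw2, htw2⟩ := ih hA' (Or.inr ⟨hu', hx₀⟩) hv
        refine ⟨tw1.append tw2, ?_⟩
        intro t ht
        rcases (SimpleGraph.Walk.mem_support_append_iff _ _).mp ht with ht | ht
        · exact ⟨_, htw1 t ht, huA⟩
        · exact htw2 t ht
      · refine ih hA' (Or.inr ⟨hu', ?_⟩) hv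
        rintro w yy ⟨p, hp⟩ hadj hyy
        refine hpr.2 w yy ⟨SimpleGraph.Walk.cons h p, ?_⟩ hadj hyy
        intro t ht
        rw [SimpleGraph.Walk.support_cons] at ht
        rcases List.mem_cons.mp ht with rfl | ht
        · exact hpr.1
        · exact hp t ht

lemma subgraph_walk {F : G.Subgraph} (hF : F.Connected) {u v : V}
    (hu : u ∈ F.verts) (hv : v ∈ F.verts) :
    ∃ W : G.Walk u v, ∀ z ∈ W.support, z ∈ F.verts := by
  obtain ⟨-, hw⟩ := (Subgraph.connected_iff_forall_exists_walk_subgraph F).mp hF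
  obtain ⟨p, hp⟩ := hw hu hv
  exact ⟨p, fun z hz => (Subgraph.verts_mono hp) ((p.mem_verts_toSubgraph).mpr hz)⟩

lemma NF_wconn (d : TreeDecompS G S T) {F : G.Subgraph} (hc : F.Connected) :
    WConn T (NFd d F.verts) := by
  rintro x ⟨u, hub, huF⟩ y ⟨v, hvb, hvF⟩
  obtain ⟨W, hW⟩ := subgraph_walk hc huF hvF
  exact anchor_walk d W hW (Or.inl hub) hvb

lemma NF_nonempty (d : TreeDecompS G S T) {F : G.Subgraph}
    (hSne : (F.verts ∩ S).Nonempty) : (NFd d F.verts).Nonempty := by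
  obtain ⟨s, hsF, hsS⟩ := hSne
  obtain ⟨y, hy⟩ := Set.mem_iUnion.mp (d.S_subset hsS)
  exact ⟨y, s, hy, hsF⟩

lemma anchor_in_NF (d : TreeDecompS G S T) {F : G.Subgraph} (hc : F.Connected)
    (hSne : (F.verts ∩ S).Nonempty) {v : V} (hvF : v ∈ F.verts)
    (hv : v ∉ ⋃ x', d.bag x') {x₀ : ι}
    (hx₀ : ∀ w y, ReachOutside G (⋃ x', d.bag x') v w → G.Adj w y →
      y ∈ ⋃ x', d.bag x' → y ∈ d.bag x₀) :
    x₀ ∈ NFd d F.verts := by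
  obtain ⟨s, hsF, hsS⟩ := hSne
  obtain ⟨y, hy⟩ := Set.mem_iUnion.mp (d.S_subset hsS)
  obtain ⟨W, hW⟩ := subgraph_walk hc hvF hsF
  obtain ⟨tw, htw⟩ := anchor_walk d W hW (Or.inr ⟨hv, hx₀⟩) hy
  exact htw x₀ tw.start_mem_support

lemma NF_meet (d : TreeDecompS G S T) {F F' : G.Subgraph}
    (hcF : F.Connected) (hcF' : F'.Connected)
    (hSF : (F.verts ∩ S).Nonempty) (hSF' : (F'.verts ∩ S).Nonempty)
    (hmeet : (F.verts ∩ F'.verts).Nonempty) :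
    (NFd d F.verts ∩ NFd d F'.verts).Nonempty := by
  obtain ⟨v, hvF, hvF'⟩ := hmeet
  by_cases hv : v ∈ ⋃ x', d.bag x'
  · obtain ⟨x, hx⟩ := Set.mem_iUnion.mp hv
    exact ⟨x, ⟨v, hx, hvF⟩, ⟨v, hx, hvF'⟩⟩
  · obtain ⟨x₀, hx₀⟩ := d.comp_in_bag v hv
    exact ⟨x₀, anchor_in_NF d hcF hSF hvF hv hx₀, anchor_in_NF d hcF' hSF' hvF' hv hx₀⟩


lemma EP_main {V ι : Type} [Fintype V] (G : SimpleGraph V) (S : Set V)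
    (T : SimpleGraph ι) (d : TreeDecompS G S T)
    (ℱ : Set G.Subgraph) (hconn : ∀ F ∈ ℱ, F.Connected)
    (hS : ∀ F ∈ ℱ, (F.verts ∩ S).Nonempty) (r : ι) :
    ∀ (k : ℕ) (𝒢 : Set G.Subgraph), 𝒢 ⊆ ℱ →
      (∃ f : Fin (k+1) → G.Subgraph, (∀ i, f i ∈ 𝒢) ∧
        ∀ i j, i ≠ j → Disjoint ((f i).verts) ((f j).verts)) ∨
      (∃ xs : Finset ι, xs.card ≤ k ∧
        ∀ F ∈ 𝒢, (F.verts ∩ ⋃ x ∈ xs, d.bag x).Nonempty) := by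
  intro k
  induction k with
  | zero =>
    intro 𝒢 h𝒢
    by_cases hne : 𝒢.Nonempty
    · obtain ⟨F, hF⟩ := hne
      exact Or.inl ⟨fun _ => F, fun _ => hF,
        fun i j hij => absurd (Fin.ext (by have h1 := i.isLt; have h2 := j.isLt; omega)) hij⟩
    · exact Or.inr ⟨∅, by simp, fun F hF => absurd ⟨F, hF⟩ hne⟩
  | succ k ih =>
    intro 𝒢 h𝒢
    by_cases hne : 𝒢.Nonempty
    swap
    · exact Or.inr ⟨∅, by simp, fun F hF => absurd ⟨F, hF⟩ hne⟩
    -- pivot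
    obtain ⟨F₁, hF₁⟩ := hne
    set md : G.Subgraph → ℕ :=
      fun F => sInf {n | ∃ x ∈ NFd d F.verts, T.dist x r = n} with hmd
    have himg : {n | ∃ F ∈ 𝒢, md F = n}.Finite := by
      have : Finite (Set V) := inferInstance
      refine Set.Finite.subset
        (Set.finite_range (fun A : Set V => sInf {n | ∃ x ∈ NFd d A, T.dist x r = n})) ?_
      rintro n ⟨F, _, rfl⟩
      exact ⟨F.verts, rfl⟩
    have hnonemp : {n | ∃ F ∈ 𝒢, md F = n}.Nonempty := ⟨md F₁, F₁, hF₁, rfl⟩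
    obtain ⟨F₀, hF₀𝒢, hF₀val⟩ := Nat.sSup_mem hnonemp himg.bddAbove
    have hmax : ∀ F ∈ 𝒢, md F ≤ md F₀ :=
      fun F hF => hF₀val ▸ le_csSup himg.bddAbove ⟨F, hF, rfl⟩
    have hD0ne : {n | ∃ x ∈ NFd d F₀.verts, T.dist x r = n}.Nonempty := by
      obtain ⟨x, hx⟩ := NF_nonempty d (hS F₀ (h𝒢 hF₀𝒢))
      exact ⟨_, x, hx, rfl⟩
    obtain ⟨x₀, hx₀NF, hx₀dist⟩ := Nat.sInf_mem hD0ne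
    have hx₀min : ∀ x ∈ NFd d F₀.verts, T.dist x₀ r ≤ T.dist x r := fun x hx =>
      hx₀dist ▸ Nat.sInf_le ⟨x, hx, rfl⟩
    have key : ∀ F ∈ 𝒢, x₀ ∉ NFd d F.verts → Disjoint F.verts F₀.verts := by
      intro F hF hx₀F
      by_contra hnd
      obtain ⟨v, hvF, hvF₀⟩ := Set.not_disjoint_iff.mp hnd
      obtain ⟨y, hyF, hyF₀⟩ := NF_meet d (hconn F (h𝒢 hF)) (hconn F₀ (h𝒢 hF₀𝒢))
        (hS F (h𝒢 hF)) (hS F₀ (h𝒢 hF₀𝒢)) ⟨v, hvF, hvF₀⟩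
      have hDne : {n | ∃ x ∈ NFd d F.verts, T.dist x r = n}.Nonempty := ⟨_, y, hyF, rfl⟩
      obtain ⟨z, hzF, hzdist⟩ := Nat.sInf_mem hDne
      have hzle : T.dist z r ≤ T.dist x₀ r := by
        rw [hzdist, hx₀dist]
        exact hmax F hF
      exact hx₀F (tree_pivot d.isTree r (NF_wconn d (hconn F₀ (h𝒢 hF₀𝒢)))
        (NF_wconn d (hconn F (h𝒢 hF))) hx₀NF hx₀min hyF hyF₀ hzF hzle)
    rcases ih {F ∈ 𝒢 | x₀ ∉ NFd d F.verts} (fun F hF => h𝒢 hF.1) with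
      ⟨f', hf'mem, hf'disj⟩ | ⟨xs', hxs'card, hxs'cov⟩
    · left
      refine ⟨Fin.cons F₀ f', ?_, ?_⟩
      · intro i
        induction i using Fin.cases with
        | zero => simpa using hF₀𝒢
        | succ j => simpa using (hf'mem j).1
      · intro i j hij
        induction i using Fin.cases with
        | zero =>
          induction j using Fin.cases with
          | zero => exact absurd rfl hij
          | succ j => simpa using (key _ (hf'mem j).1 (hf'mem j).2).symm
        | succ i =>
          induction j using Fin.cases with
          | zero => simpa using key _ (hf'mem i).1 (hf'mem i).2
          | succ j =>
            simpa using hf'disj i j (fun hh => hij (by rw [hh]))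
    · right
      refine ⟨insert x₀ xs', le_trans (Finset.card_insert_le _ _) (by omega), ?_⟩
      intro F hF
      by_cases hx : x₀ ∈ NFd d F.verts
      · obtain ⟨v, hvb, hvF⟩ := hx
        exact ⟨v, hvF, Set.mem_iUnion₂.mpr ⟨x₀, Finset.mem_insert_self _ _, hvb⟩⟩
      · obtain ⟨v, hvF, hvb⟩ := hxs'cov F ⟨hF, hx⟩
        obtain ⟨x, hxxs, hvx⟩ := Set.mem_iUnion₂.mp hvb
        exact ⟨v, hvF, Set.mem_iUnion₂.mpr ⟨x, Finset.mem_insert_of_mem hxxs, hvx⟩⟩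

end EPAux

/-- Erdős–Pósa property for connected subgraphs meeting `S` in a
tree decomposition of `(G,S)`. -/
theorem EP_treeDecompS {V ι : Type} [Fintype V] (G : SimpleGraph V) (S : Set V)
    (T : SimpleGraph ι) (d : TreeDecompS G S T)
    (ℱ : Set G.Subgraph) (hconn : ∀ F ∈ ℱ, F.Connected)
    (hS : ∀ F ∈ ℱ, (F.verts ∩ S).Nonempty)
    (k : ℕ) (hk : 0 < k) :
    (∃ f : Fin k → G.Subgraph, (∀ i, f i ∈ ℱ) ∧
      ∀ i j, i ≠ j → Disjoint (f i).verts (f j).verts) ∨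
    (∃ xs : Finset ι, xs.card ≤ k - 1 ∧
      ∀ F ∈ ℱ, (F.verts ∩ ⋃ x ∈ xs, d.bag x).Nonempty) := by
  obtain ⟨k', rfl⟩ : ∃ k', k = k' + 1 := ⟨k - 1, (Nat.succ_pred_eq_of_pos hk).symm⟩
  obtain ⟨r⟩ : Nonempty ι := d.isTree.isConnected.nonempty
  rcases EPAux.EP_main G S T d ℱ hconn hS r k' ℱ (subset_refl _) with h | ⟨xs, hc, hcov⟩
  · exact Or.inl h
  · exact Or.inr ⟨xs, by simpa using hc, hcov⟩
end

section
/- Let G be a graph, let (T, (W_x | x ∈ V(T))) be a tree decomposition of G, and let ℱ be a family of connected subgraphs of G. For every positive integer k, either there are k pairwise vertex-disjoint subgraphs in ℱ, or there is a set Z ⊆ V(G) that is the union of at most k−1 bags of the decomposition such that V(F) ∩ Z ≠ ∅ for every F ∈ ℱ. -/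
open SimpleGraph

namespace EPaux

open SimpleGraph Walk

variable {ι : Type} {T : SimpleGraph ι}

/-- The unique path between two vertices of a tree. -/
noncomputable def path (hT : T.IsTree) (x y : ι) : T.Walk x y :=
  (hT.existsUnique_path x y).exists.choose

lemma path_isPath (hT : T.IsTree) (x y : ι) : (path hT x y).IsPath :=
  (hT.existsUnique_path x y).exists.choose_spec

lemma path_unique (hT : T.IsTree) {x y : ι} (p : T.Walk x y) (hp : p.IsPath) :
    p = path hT x y :=
  (hT.existsUnique_path x y).unique hp (path_isPath hT x y)

lemma path_support_subset (hT : T.IsTree) {x y : ι} (q : T.Walk x y) :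
    (path hT x y).support ⊆ q.support := by
  classical
  rw [← path_unique hT q.bypass q.bypass_isPath]
  exact q.support_bypass_subset

/-- Depth of a vertex with respect to root `r`. -/
noncomputable def dep (hT : T.IsTree) (r y : ι) : ℕ := (path hT r y).length

lemma dep_le_of_mem (hT : T.IsTree) {r y z : ι} (h : z ∈ (path hT r y).support) :
    dep hT r z ≤ dep hT r y ∧ (dep hT r z = dep hT r y → z = y) := by
  classical
  have hteq : (path hT r y).takeUntil z h = path hT r z :=
    path_unique hT _ ((path_isPath hT r y).takeUntil h)
  have hlen : dep hT r z + ((path hT r y).dropUntil z h).length = dep hT r y := by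
    classical
    have h2 := congrArg Walk.length ((path hT r y).take_spec h)
    rw [Walk.length_append, hteq] at h2
    exact h2
  refine ⟨by omega, fun he => ?_⟩
  exact Walk.eq_of_length_eq_zero (by omega :
    ((path hT r y).dropUntil z h).length = 0)

lemma concat_isPath (hT : T.IsTree) {r u v : ι} (h : T.Adj u v)
    (hv : v ∉ (path hT r u).support) : ((path hT r u).concat h).IsPath := by
  classical
  rw [Walk.isPath_def, Walk.support_concat, List.nodup_append]
  refine ⟨(path_isPath hT r u).support_nodup, List.nodup_singleton _, ?_⟩
  intro a ha b hb hab
  rw [List.mem_singleton] at hb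
  subst hb
  subst hab
  exact hv ha

lemma adj_dep (hT : T.IsTree) (r : ι) {u v : ι} (h : T.Adj u v) :
    dep hT r v = dep hT r u + 1 ∨ dep hT r u = dep hT r v + 1 := by
  classical
  by_cases hv : v ∈ (path hT r u).support
  · right
    have hteq : (path hT r u).takeUntil v hv = path hT r v :=
      path_unique hT _ ((path_isPath hT r u).takeUntil hv)
    have hdeq : (path hT r u).dropUntil v hv = path hT v u :=
      path_unique hT _ ((path_isPath hT r u).dropUntil hv)
    have hedge : (Walk.cons h.symm Walk.nil : T.Walk v u) = path hT v u :=
      path_unique hT _ (by simp [Walk.isPath_def, h.ne'])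
    have hlen := congrArg Walk.length ((path hT r u).take_spec hv)
    rw [Walk.length_append, hteq, hdeq, ← hedge] at hlen
    simp only [Walk.length_cons, Walk.length_nil] at hlen
    have hlen2 : dep hT r v + 1 = dep hT r u := hlen
    omega
  · left
    have hlen := congrArg Walk.length (path_unique hT _ (concat_isPath hT h hv))
    rw [Walk.length_concat] at hlen
    exact hlen.symm

lemma parent_eq (hT : T.IsTree) (r : ι) {u v : ι} (h : T.Adj u v)
    (hd : dep hT r v = dep hT r u + 1) :
    path hT r v = (path hT r u).concat h := by
  classical
  have hv : v ∉ (path hT r u).support := by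
    classical
    intro hv
    have := (dep_le_of_mem hT hv).1
    omega
  exact (path_unique hT _ (concat_isPath hT h hv)).symm

lemma parent_support (hT : T.IsTree) (r : ι) {u v : ι} (h : T.Adj u v)
    (hd : dep hT r v = dep hT r u + 1) :
    (path hT r v).support = (path hT r u).support ++ [v] := by
  classical
  rw [parent_eq hT r h hd, Walk.support_concat]

lemma anc_step (hT : T.IsTree) (r : ι) {x z z' : ι} (h : T.Adj z z')
    (hx : x ∈ (path hT r z).support) (hd : dep hT r x ≤ dep hT r z') :
    x ∈ (path hT r z').support := by
  classical
  rcases adj_dep hT r h with h1 | h2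
  · rw [parent_support hT r h h1]
    exact List.mem_append_left _ hx
  · rw [parent_support hT r h.symm h2] at hx
    rcases List.mem_append.1 hx with h' | h'
    · exact h'
    · rw [List.mem_singleton] at h'
      subst h'
      have := (dep_le_of_mem hT (Walk.end_mem_support (path hT r x))).1
      omega

lemma anc_of_walk (hT : T.IsTree) (r : ι) {x y : ι} (q : T.Walk x y)
    (hq : ∀ z ∈ q.support, dep hT r x ≤ dep hT r z) :
    x ∈ (path hT r y).support := by
  classical
  have aux : ∀ (a b : ι) (q : T.Walk a b), x ∈ (path hT r a).support →
      (∀ z ∈ q.support, dep hT r x ≤ dep hT r z) → x ∈ (path hT r b).support := by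
    classical
    intro a b q
    induction q with
    | nil => exact fun h _ => h
    | @cons a c b h q ih =>
      intro hxa hq'
      refine ih ?_ ?_
      · refine anc_step hT r h hxa (hq' c ?_)
        rw [Walk.support_cons]
        exact List.mem_cons_of_mem _ q.start_mem_support
      · intro z hz
        exact hq' z (by rw [Walk.support_cons]; exact List.mem_cons_of_mem _ hz)
  exact aux x y q (Walk.end_mem_support _) hq

lemma comparable (hT : T.IsTree) (r : ι) {x x' y : ι}
    (hx : x ∈ (path hT r y).support) (hx' : x' ∈ (path hT r y).support)
    (hd : dep hT r x' ≤ dep hT r x) :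
    x = x' ∨ x ∈ (path hT x' y).support := by
  classical
  have hteq : (path hT r y).takeUntil x' hx' = path hT r x' :=
    path_unique hT _ ((path_isPath hT r y).takeUntil hx')
  have hdeq : (path hT r y).dropUntil x' hx' = path hT x' y :=
    path_unique hT _ ((path_isPath hT r y).dropUntil hx')
  rw [← (path hT r y).take_spec hx', Walk.mem_support_append_iff] at hx
  rcases hx with h' | h'
  · left
    rw [hteq] at h'
    have h2 := dep_le_of_mem hT h'
    exact h2.2 (le_antisymm h2.1 hd)
  · right
    rw [hdeq] at h'
    exact h'

end EPaux

section EPgraph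

open SimpleGraph EPaux

variable {V ι : Type} {G : SimpleGraph V} {T : SimpleGraph ι}
  (d : TreeDecompS G Set.univ T)

/-- The subtree of the decomposition tree associated with a subgraph `F`. -/
def EPtset (F : G.Subgraph) : Set ι := {a | (F.verts ∩ d.bag a).Nonempty}

lemma EPmem_bag_union (v : V) : v ∈ ⋃ x, d.bag x := d.S_subset (Set.mem_univ v)

lemma EPbagwalk (v : V) {a b : ι} (ha : v ∈ d.bag a) (hb : v ∈ d.bag b) :
    ∃ q : T.Walk a b, ∀ z ∈ q.support, v ∈ d.bag z := by
  classical
  have hc := d.bags_connected v (EPmem_bag_union d v)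
  have hr := hc.preconnected ⟨a, ha⟩ ⟨b, hb⟩
  obtain ⟨p⟩ := hr
  have aux : ∀ (α β : {x | v ∈ d.bag x}) (p : (T.induce {x | v ∈ d.bag x}).Walk α β),
      ∃ q : T.Walk α.1 β.1, ∀ z ∈ q.support, v ∈ d.bag z := by
    classical
    intro α β p
    induction p with
    | @nil α =>
      refine ⟨SimpleGraph.Walk.nil, ?_⟩
      intro z hz
      rw [SimpleGraph.Walk.support_nil, List.mem_singleton] at hz
      subst hz
      exact α.2
    | @cons α γ β h p ih =>
      obtain ⟨q, hq⟩ := ih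
      have hadj : T.Adj α.1 γ.1 := h
      refine ⟨SimpleGraph.Walk.cons hadj q, ?_⟩
      intro z hz
      rw [SimpleGraph.Walk.support_cons] at hz
      rcases List.mem_cons.1 hz with h' | h'
      · subst h'; exact α.2
      · exact hq z h'
  exact aux ⟨a, ha⟩ ⟨b, hb⟩ p

lemma EPtconn {F : G.Subgraph} (hF : F.Connected) {a b : ι}
    (ha : a ∈ EPtset d F) (hb : b ∈ EPtset d F) :
    ∃ q : T.Walk a b, ∀ z ∈ q.support, z ∈ EPtset d F := by
  classical
  obtain ⟨u, huF, hua⟩ := ha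
  obtain ⟨v, hvF, hvb⟩ := hb
  obtain ⟨w⟩ := hF.coe.preconnected ⟨u, huF⟩ ⟨v, hvF⟩
  have aux : ∀ (α β : F.verts) (w : F.coe.Walk α β) (a : ι), α.1 ∈ d.bag a →
      ∀ b : ι, β.1 ∈ d.bag b →
      ∃ q : T.Walk a b, ∀ z ∈ q.support, z ∈ EPtset d F := by
    classical
    intro α β w
    induction w with
    | @nil α =>
      intro a ha b hb
      obtain ⟨q, hq⟩ := EPbagwalk d α.1 ha hb
      exact ⟨q, fun z hz => ⟨α.1, α.2, hq z hz⟩⟩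
    | @cons α γ β h w ih =>
      intro a ha b hb
      have hFadj : F.Adj α.1 γ.1 := h
      have hGadj : G.Adj α.1 γ.1 := hFadj.adj_sub
      obtain ⟨c, hc1, hc2⟩ := d.edge_in_bag α.1 γ.1 (EPmem_bag_union d _) (EPmem_bag_union d _) hGadj
      obtain ⟨q1, hq1⟩ := EPbagwalk d α.1 ha hc1
      obtain ⟨q2, hq2⟩ := ih c hc2 b hb
      refine ⟨q1.append q2, ?_⟩
      intro z hz
      rcases (SimpleGraph.Walk.mem_support_append_iff _ _).1 hz with h' | h'
      · exact ⟨α.1, α.2, hq1 z h'⟩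
      · exact hq2 z h'
  exact aux ⟨u, huF⟩ ⟨v, hvF⟩ w a hua b hvb

/-- The minimum depth over the subtree of `F`. -/
noncomputable def EPtopD (hT : T.IsTree) (r : ι) (F : G.Subgraph) : ℕ :=
  sInf (dep hT r '' EPtset d F)

lemma EPtset_nonempty {F : G.Subgraph} (hF : F.Connected) :
    (EPtset d F).Nonempty := by
  classical
  obtain ⟨v, hv⟩ := hF.nonempty
  obtain ⟨a, ha⟩ := Set.mem_iUnion.1 (EPmem_bag_union d v)
  exact ⟨a, v, hv, ha⟩

lemma EPexists_top (hT : T.IsTree) (r : ι) {F : G.Subgraph} (hF : F.Connected) :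
    ∃ x ∈ EPtset d F, dep hT r x = EPtopD d hT r F := by
  classical
  have h := Nat.sInf_mem ((EPtset_nonempty d hF).image (dep hT r))
  obtain ⟨x, hx, hxd⟩ := h
  exact ⟨x, hx, hxd⟩

lemma EPkey (hT : T.IsTree) (r : ι) {F₁ F₂ : G.Subgraph}
    (h1 : F₁.Connected) (h2 : F₂.Connected)
    {x : ι} (hx : x ∈ EPtset d F₂) (hxd : dep hT r x = EPtopD d hT r F₂)
    (hle : EPtopD d hT r F₁ ≤ dep hT r x)
    (hmeet : (F₁.verts ∩ F₂.verts).Nonempty) : x ∈ EPtset d F₁ := by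
  classical
  obtain ⟨v, hv1, hv2⟩ := hmeet
  obtain ⟨y, hy⟩ := Set.mem_iUnion.1 (EPmem_bag_union d v)
  have hy2 : y ∈ EPtset d F₂ := ⟨v, hv2, hy⟩
  have hy1 : y ∈ EPtset d F₁ := ⟨v, hv1, hy⟩
  obtain ⟨x', hx', hx'd⟩ := EPexists_top d hT r h1
  obtain ⟨q2, hq2⟩ := EPtconn d h2 hx hy2
  have hxy : x ∈ (path hT r y).support := by
    classical
    refine anc_of_walk hT r q2 (fun z hz => ?_)
    rw [hxd]
    exact Nat.sInf_le ⟨z, hq2 z hz, rfl⟩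
  obtain ⟨q1, hq1⟩ := EPtconn d h1 hx' hy1
  have hx'y : x' ∈ (path hT r y).support := by
    classical
    refine anc_of_walk hT r q1 (fun z hz => ?_)
    rw [hx'd]
    exact Nat.sInf_le ⟨z, hq1 z hz, rfl⟩
  have hdd : dep hT r x' ≤ dep hT r x := by rw [hx'd]; exact hle
  rcases comparable hT r hxy hx'y hdd with heq | hmem
  · rw [heq]; exact hx'
  · exact hq1 x (path_support_subset hT q1 hmem)

lemma EPmain [Fintype V] (d : TreeDecompS G Set.univ T) :
    ∀ k : ℕ, 0 < k → ∀ ℱ : Set G.Subgraph, (∀ F ∈ ℱ, F.Connected) →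
    (∃ f : Fin k → G.Subgraph, (∀ i, f i ∈ ℱ) ∧
      ∀ i j, i ≠ j → Disjoint (f i).verts (f j).verts) ∨
    (∃ xs : Finset ι, xs.card ≤ k - 1 ∧
      ∀ F ∈ ℱ, (F.verts ∩ ⋃ x ∈ xs, d.bag x).Nonempty) := by
  classical
  have hT : T.IsTree := d.isTree
  obtain ⟨r⟩ := hT.isConnected.nonempty
  intro k
  induction k with
  | zero => omega
  | succ n ih =>
    intro _ ℱ hconn
    by_cases hne : ℱ.Nonempty
    swap
    · right
      exact ⟨∅, by simp, fun F hF => ((hne ⟨F, hF⟩).elim)⟩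
    · -- choose a subgraph with deepest top
      have hSfin : ((fun F => EPtopD d hT r F) '' ℱ).Finite := by
        classical
        have heq : (fun F => EPtopD d hT r F) '' ℱ =
            (fun s : Set V => sInf (dep hT r '' {a | (s ∩ d.bag a).Nonempty})) ''
              (SimpleGraph.Subgraph.verts '' ℱ) := by
          classical
          rw [Set.image_image]
          rfl
        rw [heq]
        exact (Set.toFinite _).image _
      obtain ⟨m, hmS, hmax⟩ := Set.Finite.exists_maximalFor id ((fun F => EPtopD d hT r F) '' ℱ) hSfin (hne.image _)
      obtain ⟨Fs, hFs, hFsm⟩ := hmS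
      obtain ⟨x, hx, hxd⟩ := EPexists_top d hT r (hconn Fs hFs)
      have claim : ∀ F ∈ ℱ, (F.verts ∩ Fs.verts).Nonempty → x ∈ EPtset d F := by
        classical
        intro F hF hmeet
        refine EPkey d hT r (hconn F hF) (hconn Fs hFs) hx hxd ?_ hmeet
        have hmem : EPtopD d hT r F ∈ (fun F => EPtopD d hT r F) '' ℱ := ⟨F, hF, rfl⟩
        have : m ≤ EPtopD d hT r F → m = EPtopD d hT r F := fun h => le_antisymm h (hmax hmem h)
        rw [hxd]
        have hFsm' : EPtopD d hT r Fs = m := hFsm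
        by_contra hcon
        push_neg at hcon
        have h2 := this (by omega)
        omega
      rcases Nat.eq_zero_or_pos n with hn0 | hn
      · left
        subst hn0
        refine ⟨fun _ => Fs, fun _ => hFs, fun i j hij => ?_⟩
        exact absurd (Fin.ext (by omega)) hij
      · set ℱ' := {F ∈ ℱ | ¬ (F.verts ∩ d.bag x).Nonempty} with hℱ'
        rcases ih hn ℱ' (fun F hF => hconn F hF.1) with ⟨f, hmem, hdis⟩ | ⟨xs', hcard, hhit⟩
        · left
          have hd0 : ∀ j, Disjoint Fs.verts (f j).verts := by
            classical
            intro j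
            by_contra hcon
            rw [Set.not_disjoint_iff_nonempty_inter] at hcon
            have hx' : x ∈ EPtset d (f j) := by
              classical
              refine claim (f j) (hmem j).1 ?_
              rwa [Set.inter_comm] at hcon
            exact (hmem j).2 hx'
          refine ⟨Fin.cons Fs f, ?_, ?_⟩
          · intro i
            rcases Fin.eq_zero_or_eq_succ i with h0 | ⟨j, hj⟩
            · subst h0; simpa using hFs
            · subst hj; simpa using (hmem j).1
          · intro i j hij
            rcases Fin.eq_zero_or_eq_succ i with h0 | ⟨i', hi'⟩ <;>
              rcases Fin.eq_zero_or_eq_succ j with h0' | ⟨j', hj'⟩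
            · exact absurd (h0.trans h0'.symm) hij
            · subst h0; subst hj'
              simpa using hd0 j'
            · subst h0'; subst hi'
              simpa using (hd0 i').symm
            · subst hi'; subst hj'
              have hne' : i' ≠ j' := fun h => hij (by rw [h])
              simpa using hdis i' j' hne'
        · right
          refine ⟨insert x xs', ?_, ?_⟩
          · have := Finset.card_insert_le x xs'
            omega
          · intro F hF
            by_cases hxF : (F.verts ∩ d.bag x).Nonempty
            · obtain ⟨v, hv1, hv2⟩ := hxF
              exact ⟨v, hv1, Set.mem_biUnion (Finset.mem_insert_self x xs') hv2⟩
            · obtain ⟨v, hv1, hv2⟩ := hhit F ⟨hF, hxF⟩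
              refine ⟨v, hv1, ?_⟩
              rw [Set.mem_iUnion₂] at hv2 ⊢
              obtain ⟨z, hz1, hz2⟩ := hv2
              exact ⟨z, Finset.mem_insert_of_mem hz1, hz2⟩

end EPgraph

/-- Erdős–Pósa property for connected subgraphs in a tree
decomposition of `G` (a tree decomposition of `(G, V(G))`). -/
theorem EP_treeDecomp {V ι : Type} [Fintype V] (G : SimpleGraph V)
    (T : SimpleGraph ι) (d : TreeDecompS G Set.univ T)
    (ℱ : Set G.Subgraph) (hconn : ∀ F ∈ ℱ, F.Connected)
    (k : ℕ) (hk : 0 < k) :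
    (∃ f : Fin k → G.Subgraph, (∀ i, f i ∈ ℱ) ∧
      ∀ i j, i ≠ j → Disjoint (f i).verts (f j).verts) ∨
    (∃ xs : Finset ι, xs.card ≤ k - 1 ∧
      ∀ F ∈ ℱ, (F.verts ∩ ⋃ x ∈ xs, d.bag x).Nonempty) := by
  exact EPmain d k hk ℱ hconn
end

section
/- For every positive integer k, every graph G with at least one vertex, and every S ⊆ V(G): if (G,S) admits a tangle of order k, then every tree decomposition of (G,S) has width at least k−1 (i.e. tw(G,S) ≥ k−1). -/
open SimpleGraph

section TangleLemmas

variable {V : Type} [Fintype V] {G : SimpleGraph V} {S : Set V} {k : ℕ}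
  {𝒯 : Set (Separation G)}

/-- Neighbourhood condition: all neighbours of `P` lie in `P ∪ X`. -/
def NbCond (G : SimpleGraph V) (X P : Set V) : Prop :=
  ∀ u v : V, G.Adj u v → u ∈ P → v ∈ P ∪ X

/-- The separation with small side `P ∪ X` (edges touching `P`). -/
def mkSep (G : SimpleGraph V) (X P : Set V) (h : NbCond G X P) : Separation G where
  A := { verts := P ∪ X
         Adj := fun u v => G.Adj u v ∧ (u ∈ P ∨ v ∈ P)
         adj_sub := fun h => h.1
         edge_vert := by
           rintro u v ⟨ha, hu | hv⟩
           · exact Or.inl hu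
           · exact h _ _ ha.symm hv
         symm := ⟨fun u v ⟨ha, h2⟩ => ⟨ha.symm, h2.symm⟩⟩ }
  B := { verts := Pᶜ
         Adj := fun u v => G.Adj u v ∧ u ∉ P ∧ v ∉ P
         adj_sub := fun h => h.1
         edge_vert := fun h => h.2.1
         symm := ⟨fun u v ⟨ha, h1, h2⟩ => ⟨ha.symm, h2, h1⟩⟩ }
  union_eq := by
    apply SimpleGraph.Subgraph.ext
    · ext v
      simp only [Subgraph.verts_sup, Subgraph.verts_top, Set.mem_univ, iff_true,
        Set.mem_union, Set.mem_compl_iff]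
      tauto
    · ext u v
      simp only [Subgraph.sup_adj, Subgraph.top_adj]
      by_cases hu : u ∈ P <;> by_cases hv : v ∈ P <;> tauto
  edge_disjoint := by
    rintro u v ⟨_, hu | hv⟩ ⟨_, h1, h2⟩
    exacts [h1 hu, h2 hv]

lemma mkSep_A_verts (X P : Set V) (h : NbCond G X P) :
    (mkSep G X P h).A.verts = P ∪ X := rfl

lemma mkSep_A_adj (X P : Set V) (h : NbCond G X P) (u v : V) :
    (mkSep G X P h).A.Adj u v ↔ G.Adj u v ∧ (u ∈ P ∨ v ∈ P) := Iff.rfl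

lemma mkSep_flip_A_verts (X P : Set V) (h : NbCond G X P) :
    (mkSep G X P h).flip.A.verts = Pᶜ := rfl

lemma mkSep_flip_A_adj (X P : Set V) (h : NbCond G X P) (u v : V) :
    (mkSep G X P h).flip.A.Adj u v ↔ G.Adj u v ∧ u ∉ P ∧ v ∉ P := Iff.rfl

lemma mkSep_order_le (X P : Set V) (h : NbCond G X P) :
    (mkSep G X P h).order ≤ X.ncard := by
  apply Set.ncard_le_ncard _ X.toFinite
  rintro v ⟨hv1 | hv1, hv2⟩
  · exact absurd hv1 hv2
  · exact hv1

/-- The separation whose small side is the induced subgraph on `X`. -/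
def sigmaSep (G : SimpleGraph V) (X : Set V) : Separation G where
  A := { verts := X
         Adj := fun u v => G.Adj u v ∧ u ∈ X ∧ v ∈ X
         adj_sub := fun h => h.1
         edge_vert := fun h => h.2.1
         symm := ⟨fun u v ⟨ha, h1, h2⟩ => ⟨ha.symm, h2, h1⟩⟩ }
  B := { verts := Set.univ
         Adj := fun u v => G.Adj u v ∧ ¬(u ∈ X ∧ v ∈ X)
         adj_sub := fun h => h.1
         edge_vert := fun _ => Set.mem_univ _
         symm := ⟨fun u v ⟨ha, h1⟩ => ⟨ha.symm, fun hc => h1 ⟨hc.2, hc.1⟩⟩⟩ }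
  union_eq := by
    apply SimpleGraph.Subgraph.ext
    · simp [Set.union_univ]
    · ext u v
      simp only [Subgraph.sup_adj, Subgraph.top_adj]
      tauto
  edge_disjoint := by rintro u v ⟨_, h1, h2⟩ ⟨_, h3⟩; exact h3 ⟨h1, h2⟩

variable (hT : IsTangleS G S k 𝒯)
include hT

lemma sigma_mem (X : Set V) (hX : X.ncard ≤ k - 1) : sigmaSep G X ∈ 𝒯 := by
  rcases hT.1.2.1 (sigmaSep G X) (by
    show ((X ∩ Set.univ).ncard ≤ k - 1)
    rwa [Set.inter_univ]) with h | h
  · exact h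
  · exact absurd rfl (hT.1.2.2.2 _ h)

lemma mkSep_mem_union {X X' X'' P Q : Set V} {h1 : NbCond G X P} {h2 : NbCond G X' Q}
    (hP : mkSep G X P h1 ∈ 𝒯) (hQ : mkSep G X' Q h2 ∈ 𝒯)
    (h3 : NbCond G X'' (P ∪ Q)) (hX'' : X''.ncard ≤ k - 1) :
    mkSep G X'' (P ∪ Q) h3 ∈ 𝒯 := by
  rcases hT.1.2.1 (mkSep G X'' (P ∪ Q) h3)
      (le_trans (mkSep_order_le _ _ _) hX'') with h | h
  · exact h
  exfalso
  apply hT.1.2.2.1 _ hP _ hQ _ h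
  apply SimpleGraph.Subgraph.ext
  · ext v
    simp only [Subgraph.verts_sup, Subgraph.verts_top, Set.mem_univ, iff_true,
      Set.mem_union, Set.mem_compl_iff, mkSep_A_verts, mkSep_flip_A_verts]
    by_cases hv : v ∈ P <;> by_cases hv' : v ∈ Q <;> tauto
  · ext u v
    simp only [Subgraph.sup_adj, Subgraph.top_adj, mkSep_A_adj, mkSep_flip_A_adj]
    constructor
    · rintro ((⟨h, _⟩ | ⟨h, _⟩) | ⟨h, _⟩) <;> exact h
    · intro ha
      by_cases hu : u ∈ P
      · exact Or.inl (Or.inl ⟨ha, Or.inl hu⟩)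
      by_cases hv : v ∈ P
      · exact Or.inl (Or.inl ⟨ha, Or.inr hv⟩)
      by_cases hu' : u ∈ Q
      · exact Or.inl (Or.inr ⟨ha, Or.inl hu'⟩)
      by_cases hv' : v ∈ Q
      · exact Or.inl (Or.inr ⟨ha, Or.inr hv'⟩)
      · exact Or.inr ⟨ha, by simp [Set.mem_union, hu, hu'], by simp [Set.mem_union, hv, hv']⟩

lemma mkSep_mem_transfer (s : Separation G) (hs : s ∈ 𝒯) {X' P' : Set V}
    (h3 : NbCond G X' P') (hX' : X'.ncard ≤ k - 1)
    (hsub : P' ⊆ s.A.verts)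
    (hedge : ∀ u v, G.Adj u v → (u ∈ P' ∨ v ∈ P') → s.A.Adj u v) :
    mkSep G X' P' h3 ∈ 𝒯 := by
  rcases hT.1.2.1 (mkSep G X' P' h3)
      (le_trans (mkSep_order_le _ _ _) hX') with h | h
  · exact h
  exfalso
  apply hT.1.2.2.1 _ hs _ hs _ h
  apply SimpleGraph.Subgraph.ext
  · ext v
    simp only [Subgraph.verts_sup, Subgraph.verts_top, Set.mem_univ, iff_true,
      Set.mem_union, Set.mem_compl_iff, mkSep_flip_A_verts]
    by_cases hv : v ∈ P'
    · exact Or.inl (Or.inl (hsub hv))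
    · exact Or.inr hv
  · ext u v
    simp only [Subgraph.sup_adj, Subgraph.top_adj, mkSep_flip_A_adj]
    constructor
    · rintro ((h | h) | ⟨h, _⟩)
      exacts [s.A.adj_sub h, s.A.adj_sub h, h]
    · intro ha
      by_cases hu : u ∈ P'
      · exact Or.inl (Or.inl (hedge _ _ ha (Or.inl hu)))
      by_cases hv : v ∈ P'
      · exact Or.inl (Or.inl (hedge _ _ ha (Or.inr hv)))
      · exact Or.inr ⟨ha, hu, hv⟩

/-- Final contradiction: a tangle-small side `P` with boundary `X`, `|X| ≤ k-1`,
such that `S ⊆ P ∪ X`, is impossible. -/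
lemma final_contradiction {X P : Set V} (hnb : NbCond G X P)
    (hmem : mkSep G X P hnb ∈ 𝒯) (hX : X.ncard ≤ k - 1) (hS : S ⊆ P ∪ X) : False := by
  classical
  set Q : Set V := (P ∪ X)ᶜ with hQdef
  have hQnb : NbCond G X Q := by
    intro u v ha hu
    by_cases hv : v ∈ Q
    · exact Or.inl hv
    have hv' : v ∈ P ∪ X := by
      by_contra hc
      exact hv hc
    rcases hv' with hv' | hv'
    · exfalso
      rcases hnb v u ha.symm hv' with h | h
      · exact hu (Or.inl h)
      · exact hu (Or.inr h)
    · exact Or.inr hv'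
  rcases hT.1.2.1 (mkSep G X Q hQnb)
      (le_trans (mkSep_order_le _ _ _) hX) with h | h
  · apply hT.1.2.2.1 _ hmem _ h _ (sigma_mem hT X hX)
    apply SimpleGraph.Subgraph.ext
    · ext v
      simp only [Subgraph.verts_sup, Subgraph.verts_top, Set.mem_univ, iff_true,
        Set.mem_union, mkSep_A_verts]
      show (v ∈ P ∪ X ∨ v ∈ Q ∪ X) ∨ v ∈ X
      by_cases hv : v ∈ P ∪ X
      · rcases hv with hv | hv
        · exact Or.inl (Or.inl (Or.inl hv))
        · exact Or.inr hv
      · exact Or.inl (Or.inr (Or.inl hv))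
    · ext u v
      simp only [Subgraph.sup_adj, Subgraph.top_adj, mkSep_A_adj]
      constructor
      · rintro ((⟨h, _⟩ | ⟨h, _⟩) | ⟨h, _⟩) <;> exact h
      · intro ha
        by_cases hu : u ∈ P
        · exact Or.inl (Or.inl ⟨ha, Or.inl hu⟩)
        by_cases hv : v ∈ P
        · exact Or.inl (Or.inl ⟨ha, Or.inr hv⟩)
        by_cases hu' : u ∈ Q
        · exact Or.inl (Or.inr ⟨ha, Or.inl hu'⟩)
        by_cases hv' : v ∈ Q
        · exact Or.inl (Or.inr ⟨ha, Or.inr hv'⟩)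
        · refine Or.inr ⟨ha, ?_, ?_⟩
          · rcases not_not.mp (show ¬ u ∉ P ∪ X from hu') with h | h
            · exact absurd h hu
            · exact h
          · rcases not_not.mp (show ¬ v ∉ P ∪ X from hv') with h | h
            · exact absurd h hv
            · exact h
  · apply hT.2 _ h
    rw [mkSep_flip_A_verts, hQdef, compl_compl]
    exact hS

end TangleLemmas

section ReachLemmas

variable {V : Type} {G : SimpleGraph V} {U : Set V} {u v w : V}

lemma ReachOutside.fst_not_mem (h : ReachOutside G U u v) : u ∉ U :=
  h.choose_spec u h.choose.start_mem_support

lemma ReachOutside.snd_not_mem (h : ReachOutside G U u v) : v ∉ U :=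
  h.choose_spec v h.choose.end_mem_support

lemma ReachOutside.refl (h : u ∉ U) : ReachOutside G U u u :=
  ⟨SimpleGraph.Walk.nil, by simp [SimpleGraph.Walk.support_nil, h]⟩

lemma ReachOutside.symm (h : ReachOutside G U u v) : ReachOutside G U v u := by
  obtain ⟨p, hp⟩ := h
  exact ⟨p.reverse, fun x hx => hp x (by
    rw [SimpleGraph.Walk.support_reverse] at hx; exact List.mem_reverse.mp hx)⟩

lemma ReachOutside.trans (h1 : ReachOutside G U u v) (h2 : ReachOutside G U v w) :
    ReachOutside G U u w := by
  obtain ⟨p, hp⟩ := h1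
  obtain ⟨q, hq⟩ := h2
  refine ⟨p.append q, fun x hx => ?_⟩
  rw [SimpleGraph.Walk.mem_support_append_iff] at hx
  exact hx.elim (hp x) (hq x)

lemma ReachOutside.of_adj (h : G.Adj u v) (hu : u ∉ U) (hv : v ∉ U) :
    ReachOutside G U u v :=
  ⟨SimpleGraph.Walk.cons h SimpleGraph.Walk.nil, by
    intro x hx
    simp only [SimpleGraph.Walk.support_cons, SimpleGraph.Walk.support_nil,
      List.mem_cons, List.mem_singleton] at hx
    rcases hx with rfl | rfl | h'
    · exact hu
    · exact hv
    · exact absurd h' List.not_mem_nil⟩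

end ReachLemmas

section BehindLemmas

open SimpleGraph

/-- The component of `T - t` containing `y`. -/
def Behind {ι : Type} (T : SimpleGraph ι) (t y : ι) : Set ι :=
  {z | ∃ p : T.Walk y z, t ∉ p.support}

variable {ι : Type} {T : SimpleGraph ι} {t y a b : ι}

lemma behind_self (h : y ≠ t) : y ∈ Behind T t y :=
  ⟨Walk.nil, by simp [Walk.support_nil, h.symm]⟩

lemma not_behind_self : t ∉ Behind T t y := by
  rintro ⟨p, hp⟩
  exact hp p.end_mem_support

lemma crossing_eq (ha : a ∈ Behind T t y) (hab : T.Adj a b) (hb : b ∉ Behind T t y) :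
    b = t := by
  by_contra hne
  obtain ⟨p, hp⟩ := ha
  refine hb ⟨p.concat hab, ?_⟩
  rw [Walk.support_concat]
  intro hc
  rcases List.mem_append.mp hc with hc | hc
  · exact hp hc
  · exact hne (List.mem_singleton.mp hc).symm

/-- In a tree, the only neighbour of `t` inside `Behind t y` is `y`. -/
lemma adj_behind_eq (htree : T.IsTree) (hadj : T.Adj t y) (hb : T.Adj t b)
    (hbB : b ∈ Behind T t y) : b = y := by
  haveI : DecidableEq ι := Classical.decEq ι
  by_contra hne
  obtain ⟨p0, hp0⟩ := hbB
  set q : T.Walk y b := p0.toPath.val with hqdef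
  have hq : q.IsPath := p0.toPath.property
  have htq : t ∉ q.support := fun hc => hp0 (Walk.support_toPath_subset p0 hc)
  have hp1 : (Walk.cons hb q.reverse : T.Walk t y).IsPath := by
    apply Walk.IsPath.cons hq.reverse
    rwa [Walk.support_reverse, List.mem_reverse]
  have hcyc : (Walk.cons hadj.symm (Walk.cons hb q.reverse) : T.Walk y y).IsCycle := by
    rw [Walk.cons_isCycle_iff]
    refine ⟨hp1, ?_⟩
    rw [Walk.edges_cons]
    intro hc
    rcases List.mem_cons.mp hc with hc | hc
    · rw [Sym2.eq_iff] at hc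
      rcases hc with ⟨h1, _⟩ | ⟨h1, _⟩
      · exact hadj.ne h1.symm
      · exact hne h1.symm
    · have := Walk.snd_mem_support_of_mem_edges _ hc
      rw [Walk.support_reverse, List.mem_reverse] at this
      exact htq this
  exact htree.IsAcyclic _ hcyc

end BehindLemmas

section DecompLemmas

open SimpleGraph

variable {V ι : Type} {G : SimpleGraph V} {S : Set V} {T : SimpleGraph ι}

/-- The union of the bags. -/
def bagU (d : TreeDecompS G S T) : Set V := ⋃ x, d.bag x

/-- A node whose bag contains the whole boundary of the component of `v`. -/
noncomputable def cnode [Nonempty ι] (d : TreeDecompS G S T) (v : V) : ι :=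
  Classical.epsilon (fun x => ∀ w z : V,
    ReachOutside G (bagU d) v w → G.Adj w z → z ∈ bagU d → z ∈ d.bag x)

lemma cnode_spec [Nonempty ι] (d : TreeDecompS G S T) {v : V} (hv : v ∉ bagU d) :
    ∀ w z, ReachOutside G (bagU d) v w → G.Adj w z → z ∈ bagU d →
      z ∈ d.bag (cnode d v) :=
  Classical.epsilon_spec (d.comp_in_bag v hv)

/-- Union of bags behind `y` (viewed from `t`). -/
def SideU (d : TreeDecompS G S T) (t y : ι) : Set V :=
  {u | ∃ z ∈ Behind T t y, u ∈ d.bag z}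

/-- Union of bags not behind `y`. -/
def SideUc (d : TreeDecompS G S T) (t y : ι) : Set V :=
  {u | ∃ z, z ∉ Behind T t y ∧ u ∈ d.bag z}

/-- Component vertices attached behind `y`. -/
def CompB [Nonempty ι] (d : TreeDecompS G S T) (t y : ι) : Set V :=
  {v | v ∉ bagU d ∧ ∃ w, ReachOutside G (bagU d) v w ∧ cnode d w ∈ Behind T t y}

/-- All of `G` strictly behind `y`. -/
def DSide [Nonempty ι] (d : TreeDecompS G S T) (t y : ι) : Set V :=
  (SideU d t y \ d.bag t) ∪ CompB d t y

/-- All of `G` strictly on the `t`-side. -/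
def PSide [Nonempty ι] (d : TreeDecompS G S T) (t y : ι) : Set V :=
  (SideUc d t y \ d.bag y) ∪ {v | v ∉ bagU d ∧ v ∉ CompB d t y}

variable (d : TreeDecompS G S T) {t y : ι} {u v w : V}

lemma mem_bagU_of_bag {z : ι} (h : u ∈ d.bag z) : u ∈ bagU d :=
  Set.mem_iUnion.mpr ⟨z, h⟩

/-- A walk between two nodes whose bags contain `u`, all of whose bags contain `u`. -/
lemma exists_bag_walk {z₁ z₂ : ι} (h1 : u ∈ d.bag z₁) (h2 : u ∈ d.bag z₂) :
    ∃ p : T.Walk z₁ z₂, ∀ x ∈ p.support, u ∈ d.bag x := by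
  have hconn := d.bags_connected u (mem_bagU_of_bag d h1)
  obtain ⟨q⟩ := hconn.preconnected ⟨z₁, h1⟩ ⟨z₂, h2⟩
  refine ⟨q.map (SimpleGraph.Embedding.induce {x | u ∈ d.bag x}).toHom, ?_⟩
  intro x hx
  replace hx : x ∈ (q.map (SimpleGraph.Embedding.induce {x | u ∈ d.bag x}).toHom).support := hx
  rw [Walk.support_map, List.mem_map] at hx
  obtain ⟨a, _, rfl⟩ := hx
  exact a.2

/-- A vertex lying in bags on both sides of the tree edge `(t,y)` lies in both
`bag t` and `bag y`. -/
lemma side_inter (htree : T.IsTree) (hadj : T.Adj t y) {z₁ z₂ : ι}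
    (hu1 : u ∈ d.bag z₁) (h1 : z₁ ∈ Behind T t y)
    (hu2 : u ∈ d.bag z₂) (h2 : z₂ ∉ Behind T t y) :
    u ∈ d.bag t ∧ u ∈ d.bag y := by
  obtain ⟨p, hp⟩ := exists_bag_walk d hu1 hu2
  obtain ⟨dd, hdd, hfst, hsnd⟩ := p.exists_boundary_dart (Behind T t y) h1 h2
  have hteq : dd.snd = t := crossing_eq hfst dd.adj hsnd
  have hut : u ∈ d.bag t := by
    rw [← hteq]; exact hp _ (Walk.dart_snd_mem_support_of_mem_darts _ hdd)
  refine ⟨hut, ?_⟩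
  obtain ⟨p', hp'⟩ := exists_bag_walk d hut hu1
  obtain ⟨ee, hee, hfst', hsnd'⟩ := p'.exists_boundary_dart (Behind T t y)ᶜ
    not_behind_self (not_not.mpr h1)
  have heq : ee.fst = t :=
    crossing_eq (not_not.mp hsnd') ee.adj.symm hfst'
  have hey : ee.snd = y := by
    apply adj_behind_eq htree hadj (heq ▸ ee.adj) (not_not.mp hsnd')
  have := hp' _ (Walk.dart_snd_mem_support_of_mem_darts _ hee)
  rwa [hey] at this

lemma sideU_inter_sideUc (htree : T.IsTree) (hadj : T.Adj t y)
    (h1 : u ∈ SideU d t y) (h2 : u ∈ SideUc d t y) :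
    u ∈ d.bag t ∧ u ∈ d.bag y := by
  obtain ⟨z₁, hz1, hu1⟩ := h1
  obtain ⟨z₂, hz2, hu2⟩ := h2
  exact side_inter d htree hadj hu1 hz1 hu2 hz2

lemma bag_t_subset_sideUc : d.bag t ⊆ SideUc d t y :=
  fun _ h => ⟨t, not_behind_self, h⟩

lemma bag_behind_subset_sideU {z : ι} (hz : z ∈ Behind T t y) : d.bag z ⊆ SideU d t y :=
  fun _ h => ⟨z, hz, h⟩

variable [Nonempty ι]

lemma compB_adj (hu : u ∈ CompB d t y) (ha : G.Adj u v) (hv : v ∉ bagU d) :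
    v ∈ CompB d t y := by
  obtain ⟨hu', w, hw, hcw⟩ := hu
  exact ⟨hv, w, (ReachOutside.of_adj ha hu' hv).symm.trans hw, hcw⟩

lemma compB_boundary (hu : u ∈ CompB d t y) (ha : G.Adj u v) (hv : v ∈ bagU d) :
    v ∈ SideU d t y := by
  obtain ⟨hu', w, hw, hcw⟩ := hu
  refine ⟨cnode d w, hcw, ?_⟩
  exact cnode_spec d hw.snd_not_mem u v hw.symm ha hv

lemma notCompB_boundary (hu : u ∉ bagU d) (hu2 : u ∉ CompB d t y)
    (ha : G.Adj u v) (hv : v ∈ bagU d) : v ∈ SideUc d t y := by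
  have hcn : cnode d u ∉ Behind T t y := by
    intro hc
    exact hu2 ⟨hu, u, ReachOutside.refl hu, hc⟩
  exact ⟨cnode d u, hcn, cnode_spec d hu u v (ReachOutside.refl hu) ha hv⟩

/-- Edges touching `DSide` stay in `DSide ∪ bag t`. -/
lemma nbCond_DSide (htree : T.IsTree) (hadj : T.Adj t y) :
    NbCond G (d.bag t) (DSide d t y) := by
  rintro u v ha (⟨⟨z, hz, huz⟩, hut⟩ | hu)
  · by_cases hv : v ∈ bagU d
    · obtain ⟨x, hux, hvx⟩ := d.edge_in_bag u v (mem_bagU_of_bag d huz) hv ha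
      by_cases hx : x ∈ Behind T t y
      · by_cases hvt : v ∈ d.bag t
        · exact Or.inr hvt
        · exact Or.inl (Or.inl ⟨⟨x, hx, hvx⟩, hvt⟩)
      · exact absurd (side_inter d htree hadj huz hz hux hx).1 hut
    · by_cases hcv : cnode d v ∈ Behind T t y
      · exact Or.inl (Or.inr ⟨hv, v, ReachOutside.refl hv, hcv⟩)
      · exfalso
        apply hut
        exact (side_inter d htree hadj huz hz
          (cnode_spec d hv v u (ReachOutside.refl hv) ha.symm (mem_bagU_of_bag d huz)) hcv).1
  · by_cases hv : v ∈ bagU d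
    · have := compB_boundary d hu ha hv
      by_cases hvt : v ∈ d.bag t
      · exact Or.inr hvt
      · exact Or.inl (Or.inl ⟨this, hvt⟩)
    · exact Or.inl (Or.inr (compB_adj d hu ha hv))

/-- Edges touching `PSide` stay in `PSide ∪ bag y`. -/
lemma nbCond_PSide (htree : T.IsTree) (hadj : T.Adj t y) :
    NbCond G (d.bag y) (PSide d t y) := by
  rintro u v ha (⟨⟨z, hz, huz⟩, huy⟩ | ⟨hu, hu2⟩)
  · by_cases hv : v ∈ bagU d
    · obtain ⟨x, hux, hvx⟩ := d.edge_in_bag u v (mem_bagU_of_bag d huz) hv ha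
      by_cases hx : x ∈ Behind T t y
      · exact absurd (side_inter d htree hadj hux hx huz hz).2 huy
      · by_cases hvy : v ∈ d.bag y
        · exact Or.inr hvy
        · exact Or.inl (Or.inl ⟨⟨x, hx, hvx⟩, hvy⟩)
    · refine Or.inl (Or.inr ⟨hv, fun hc => ?_⟩)
      have := compB_boundary d hc ha.symm (mem_bagU_of_bag d huz)
      exact huy (sideU_inter_sideUc d htree hadj this ⟨z, hz, huz⟩).2
  · by_cases hv : v ∈ bagU d
    · have := notCompB_boundary d hu hu2 ha hv
      by_cases hvy : v ∈ d.bag y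
      · exact Or.inr hvy
      · exact Or.inl (Or.inl ⟨this, hvy⟩)
    · refine Or.inl (Or.inr ⟨hv, fun hc => ?_⟩)
      exact hu2 (compB_adj d hc ha.symm hu)

/-- `PSide` and `DSide` are disjoint. -/
lemma pside_disj_dside (htree : T.IsTree) (hadj : T.Adj t y)
    (hu : u ∈ PSide d t y) (hu' : u ∈ DSide d t y) : False := by
  rcases hu with ⟨hsc, huy⟩ | ⟨hu1, hu2⟩ <;> rcases hu' with ⟨hsu, hut⟩ | hc
  · exact huy (sideU_inter_sideUc d htree hadj hsu hsc).2
  · obtain ⟨z, _, huz⟩ := hsc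
    exact hc.1 (mem_bagU_of_bag d huz)
  · obtain ⟨z, hz, huz⟩ := hsu
    exact hu1 (mem_bagU_of_bag d huz)
  · exact hu2 hc

/-- No edge from `PSide` into `DSide`. -/
lemma no_edge_pside_dside (htree : T.IsTree) (hadj : T.Adj t y)
    (ha : G.Adj u v) (hu : u ∈ PSide d t y) (hv : v ∈ DSide d t y) : False := by
  rcases hu with ⟨⟨z, hz, huz⟩, huy⟩ | ⟨hu1, hu2⟩ <;>
    rcases hv with ⟨⟨x, hx, hvx⟩, hvt⟩ | hc
  · obtain ⟨x', hux', hvx'⟩ :=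
      d.edge_in_bag u v (mem_bagU_of_bag d huz) (mem_bagU_of_bag d hvx) ha
    by_cases hx' : x' ∈ Behind T t y
    · exact huy (side_inter d htree hadj hux' hx' huz hz).2
    · exact hvt (side_inter d htree hadj hvx hx hvx' hx').1
  · have := compB_boundary d hc ha.symm (mem_bagU_of_bag d huz)
    exact huy (sideU_inter_sideUc d htree hadj this ⟨z, hz, huz⟩).2
  · have := notCompB_boundary d hu1 hu2 ha (mem_bagU_of_bag d hvx)
    exact hvt (sideU_inter_sideUc d htree hadj ⟨x, hx, hvx⟩ this).1
  · exact hu2 (compB_adj d hc ha.symm hu1)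

end DecompLemmas

section MainArgument

open SimpleGraph

variable {V ι : Type} [Fintype V] {G : SimpleGraph V} {S : Set V} {k : ℕ}
  {𝒯 : Set (Separation G)} {T : SimpleGraph ι}

lemma no_missing (hT : IsTangleS G S k 𝒯) (d : TreeDecompS G S T) [Nonempty ι]
    (hbag : ∀ x, (d.bag x).ncard ≤ k - 1) (M : ℕ)
    (hmax : ∀ (t' : ι) (P' : Set V) (h' : NbCond G (d.bag t') P'),
      mkSep G (d.bag t') P' h' ∈ 𝒯 → (P' ∪ d.bag t').ncard ≤ M) :
    ∀ n : ℕ, ∀ (t : ι) (P : Set V) (h : NbCond G (d.bag t) P),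
      mkSep G (d.bag t) P h ∈ 𝒯 → (P ∪ d.bag t).ncard = M →
      ∀ v, v ∉ P ∪ d.bag t → ∀ x₀, v ∈ d.bag x₀ →
      ∀ p : T.Walk t x₀, p.IsPath → p.length ≤ n → False := by
  have htree := d.isTree
  intro n
  induction n with
  | zero =>
    intro t P h hmem hM v hvP x₀ hx p hp hlen
    have : t = x₀ := p.eq_of_length_eq_zero (Nat.le_zero.mp hlen)
    exact hvP (Or.inr (this ▸ hx))
  | succ n ih =>
    intro t P h hmem hM v hvP x₀ hx p hp hlen
    cases p with
    | nil => exact hvP (Or.inr hx)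
    | @cons _ y _ hadj q =>
      rw [Walk.cons_isPath_iff] at hp
      obtain ⟨hq, htq⟩ := hp
      have hx₀B : x₀ ∈ Behind T t y := ⟨q, htq⟩
      have hDnb := nbCond_DSide d htree hadj
      have horder : (mkSep G (d.bag t) (DSide d t y) hDnb).order ≤ k - 1 :=
        le_trans (mkSep_order_le _ _ _) (hbag t)
      have hvD : v ∈ DSide d t y :=
        Or.inl ⟨⟨x₀, hx₀B, hx⟩, fun hc => hvP (Or.inr hc)⟩
      rcases hT.1.2.1 _ horder with hD | hD
      · -- the tangle points towards `t`: enlarge `P`.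
        have hPD : NbCond G (d.bag t) (P ∪ DSide d t y) := by
          intro a b ha hu
          rcases hu with hu | hu
          · rcases h a b ha hu with h' | h'
            · exact Or.inl (Or.inl h')
            · exact Or.inr h'
          · rcases hDnb a b ha hu with h' | h'
            · exact Or.inl (Or.inr h')
            · exact Or.inr h'
        have hmem2 := mkSep_mem_union hT hmem hD hPD (hbag t)
        have hle := hmax t _ hPD hmem2
        have hlt : (P ∪ d.bag t).ncard < (P ∪ DSide d t y ∪ d.bag t).ncard := by
          apply Set.ncard_lt_ncard _ (Set.toFinite _)
          constructor
          · rintro a (ha | ha)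
            · exact Or.inl (Or.inl ha)
            · exact Or.inr ha
          · intro hc
            exact hvP (hc (Or.inl (Or.inr hvD)))
        omega
      · -- the tangle points away from `t`: move to `y`.
        have hP2nb := nbCond_PSide d htree hadj
        have hP2mem : mkSep G (d.bag y) (PSide d t y) hP2nb ∈ 𝒯 := by
          apply mkSep_mem_transfer hT _ hD hP2nb (hbag y)
          · intro a ha
            rw [mkSep_flip_A_verts]
            exact fun hc => pside_disj_dside d htree hadj ha hc
          · intro a b ha hor
            rw [mkSep_flip_A_adj]
            rcases hor with hor | hor
            · exact ⟨ha, fun hc => pside_disj_dside d htree hadj hor hc,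
                fun hc => no_edge_pside_dside d htree hadj ha hor hc⟩
            · exact ⟨ha, fun hc => no_edge_pside_dside d htree hadj ha.symm hor hc,
                fun hc => pside_disj_dside d htree hadj hor hc⟩
        have hbt : d.bag t ⊆ PSide d t y ∪ d.bag y := by
          intro a ha
          by_cases hay : a ∈ d.bag y
          · exact Or.inr hay
          · exact Or.inl (Or.inl ⟨bag_t_subset_sideUc d ha, hay⟩)
        have hRnb : NbCond G (d.bag y) (P ∪ PSide d t y) := by
          intro a b ha hu
          rcases hu with hu | hu
          · rcases h a b ha hu with h' | h'
            · exact Or.inl (Or.inl h')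
            · rcases hbt h' with h'' | h''
              · exact Or.inl (Or.inr h'')
              · exact Or.inr h''
          · rcases hP2nb a b ha hu with h' | h'
            · exact Or.inl (Or.inr h')
            · exact Or.inr h'
        have hRmem := mkSep_mem_union hT hmem hP2mem hRnb (hbag y)
        have hsub : P ∪ d.bag t ⊆ P ∪ PSide d t y ∪ d.bag y := by
          rintro a (ha | ha)
          · exact Or.inl (Or.inl ha)
          · rcases hbt ha with h'' | h''
            · exact Or.inl (Or.inr h'')
            · exact Or.inr h''
        have hle := hmax y _ hRnb hRmem
        have heq : P ∪ d.bag t = P ∪ PSide d t y ∪ d.bag y := by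
          apply Set.eq_of_subset_of_ncard_le hsub _ (Set.toFinite _)
          omega
        have hM' : (P ∪ PSide d t y ∪ d.bag y).ncard = M := by rw [← heq]; exact hM
        refine ih y (P ∪ PSide d t y) hRnb hRmem hM' v ?_ x₀ hx q hq ?_
        · rw [← heq]; exact hvP
        · simpa [Walk.length_cons] using hlen

lemma width_lower (hT : IsTangleS G S k 𝒯) (d : TreeDecompS G S T)
    (hbag : ∀ x, (d.bag x).ncard ≤ k - 1) : False := by
  classical
  have htree := d.isTree
  haveI : Nonempty ι := htree.isConnected.nonempty
  set GoodSet : Set ℕ :=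
    {n | ∃ (t : ι) (P : Set V) (h : NbCond G (d.bag t) P),
      mkSep G (d.bag t) P h ∈ 𝒯 ∧ (P ∪ d.bag t).ncard = n} with hGS
  have hne : GoodSet.Nonempty := by
    have hnb : NbCond G (d.bag (Classical.arbitrary ι)) ∅ := by
      intro u v _ hu
      exact absurd hu (Set.notMem_empty u)
    refine ⟨_, Classical.arbitrary ι, ∅, hnb, ?_, rfl⟩
    rcases hT.1.2.1 (mkSep G _ ∅ hnb)
        (le_trans (mkSep_order_le _ _ _) (hbag _)) with h | h
    · exact h
    · exfalso
      apply hT.1.2.2.2 _ h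
      rw [mkSep_flip_A_verts, Set.compl_empty]
  have hbdd : BddAbove GoodSet := by
    refine ⟨(Set.univ : Set V).ncard, ?_⟩
    rintro n ⟨t, P, h, _, rfl⟩
    exact Set.ncard_le_ncard (Set.subset_univ _) (Set.toFinite _)
  obtain ⟨t, P, hnb, hmem, hμ⟩ := Nat.sSup_mem hne hbdd
  have hmax : ∀ (t' : ι) (P' : Set V) (h' : NbCond G (d.bag t') P'),
      mkSep G (d.bag t') P' h' ∈ 𝒯 → (P' ∪ d.bag t').ncard ≤ sSup GoodSet := by
    intro t' P' h' hm
    exact le_csSup hbdd ⟨t', P', h', hm, rfl⟩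
  have hU : bagU d ⊆ P ∪ d.bag t := by
    intro v hv
    by_contra hvP
    obtain ⟨x₀, hx⟩ := Set.mem_iUnion.mp hv
    obtain ⟨p0⟩ := htree.isConnected.preconnected t x₀
    exact no_missing hT d hbag (sSup GoodSet) hmax (p0.toPath : T.Walk t x₀).length
      t P hnb hmem hμ v hvP x₀ hx p0.toPath p0.toPath.property le_rfl
  exact final_contradiction hT hnb hmem (hbag t)
    (fun a ha => hU (d.S_subset ha))

end MainArgument

/-- a tangle of `(G,S)` of order `k` forces every tree decomposition of
`(G,S)` to have width at least `k-1`; in particular `tw(G,S) ≥ k-1`. -/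
theorem tw_lower_of_tangle {V : Type} [Fintype V] [Nonempty V] (G : SimpleGraph V)
    (S : Set V) (k : ℕ) (hk : 0 < k)
    (𝒯 : Set (Separation G)) (hT : IsTangleS G S k 𝒯) :
    (∀ (ι : Type) (T : SimpleGraph ι) (d : TreeDecompS G S T) (w : ℕ),
      (∀ x, (d.bag x).ncard ≤ w + 1) → k - 1 ≤ w) ∧
    k - 1 ≤ twS G S := by
  have h1 : ∀ (ι : Type) (T : SimpleGraph ι) (d : TreeDecompS G S T) (w : ℕ),
      (∀ x, (d.bag x).ncard ≤ w + 1) → k - 1 ≤ w := by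
    intro ι T d w hw
    by_contra hc
    push_neg at hc
    have hbag : ∀ x, (d.bag x).ncard ≤ k - 1 := fun x => le_trans (hw x) (by omega)
    exact width_lower hT d hbag
  refine ⟨h1, ?_⟩
  apply le_csInf
  · refine ⟨Fintype.card V - 1, Unit, ⊥, ?_⟩
    have hconn : (⊥ : SimpleGraph Unit).Connected := by
      constructor
      intro a b
      have : a = b := Subsingleton.elim a b
      exact this ▸ SimpleGraph.Reachable.refl a
    have hac : (⊥ : SimpleGraph Unit).IsAcyclic := by
      intro v c hc
      cases c with
      | nil => exact hc.ne_nil rfl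
      | cons h p => exact h.elim
    refine ⟨⟨⟨hconn, hac⟩, fun _ => Set.univ, ?_, ?_, ?_, ?_⟩, ?_⟩
    · intro a _
      exact Set.mem_iUnion.mpr ⟨(), Set.mem_univ a⟩
    · intro u v _ _ _
      exact ⟨(), Set.mem_univ u, Set.mem_univ v⟩
    · intro v _
      haveI : Nonempty ({x : Unit | v ∈ (fun _ => Set.univ) x}) := ⟨⟨(), Set.mem_univ v⟩⟩
      constructor
      intro a b
      have : a = b := Subsingleton.elim a b
      exact this ▸ SimpleGraph.Reachable.refl a
    · intro v hv
      exact absurd (Set.mem_iUnion.mpr ⟨(), Set.mem_univ v⟩) hv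
    · intro _
      show (Set.univ : Set V).ncard ≤ Fintype.card V - 1 + 1
      rw [Set.ncard_univ, Nat.card_eq_fintype_card]
      have h3 : 0 < Fintype.card V := Fintype.card_pos
      omega
  · rintro n ⟨ι, T, dd, hb⟩
    exact h1 ι T dd n hb
end
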